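/- Let ρ be a bipartite distribution on U × V, let n ≥ 1, and let 0 < p < 1. Then col_ρ(n, p) ≤ 9n · agr_ρ(p) + 48. -/

import Mathlib

open scoped BigOperators ENNReal

namespace SR

variable {U V X Y : Type*}

/-- `μ` is a probability distribution on a finite type. -/
def IsDist {α : Type*} [Fintype α] (μ : α → ℝ) : Prop :=
  (∀ a, 0 ≤ μ a) ∧ ∑ a, μ a = 1

/-- Expectation of `f` under `μ`. -/
def expect {α : Type*} [Fintype α] (μ : α → ℝ) (f : α → ℝ) : ℝ :=
  ∑ a, μ a * f a

/-- First (`U`-)marginal of a bipartite distribution. -/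
def margFst [Fintype V] (ρ : U × V → ℝ) : U → ℝ :=
  fun u => ∑ v, ρ (u, v)

/-- Second (`V`-)marginal of a bipartite distribution. -/
def margSnd [Fintype U] (ρ : U × V → ℝ) : V → ℝ :=
  fun v => ∑ u, ρ (u, v)

/-- Maximum correlation of a bipartite distribution (sSup of the empty set is 0). -/
noncomputable def cor [Fintype U] [Fintype V] (ρ : U × V → ℝ) : ℝ :=
  sSup { t : ℝ | ∃ (f : U → ℝ) (g : V → ℝ),
      expect (margFst ρ) f = 0 ∧ expect (margSnd ρ) g = 0 ∧
      expect (margFst ρ) (fun u => f u ^ 2) = 1 ∧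
      expect (margSnd ρ) (fun v => g v ^ 2) = 1 ∧
      t = ∑ x : U × V, ρ x * (f x.1 * g x.2) }

/-- Tensor product of two bipartite distributions. -/
def tensor (ρ : U × V → ℝ) (σ : X × Y → ℝ) : (U × X) × (V × Y) → ℝ :=
  fun p => ρ (p.1.1, p.2.1) * σ (p.1.2, p.2.2)

/-- Tensor product of a family of bipartite distributions. -/
def tensorPi {n : ℕ} {U V : Fin n → Type*} (ρ : ∀ i, U i × V i → ℝ) :
    (∀ i, U i) × (∀ i, V i) → ℝ :=
  fun p => ∏ i, ρ i (p.1 i, p.2 i)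

/-- The distribution of `ℓ` i.i.d. samples from a bipartite distribution `ρ`. -/
def iid (ρ : U × V → ℝ) (ℓ : ℕ) : (Fin ℓ → U) × (Fin ℓ → V) → ℝ :=
  fun p => ∏ i, ρ (p.1 i, p.2 i)

/-- Agreement complexity of `ρ` at success probability `p`. -/
noncomputable def agr [Fintype U] [Fintype V] (ρ : U × V → ℝ) (p : ℝ) : ℝ :=
  sInf { c : ℝ | ∃ (ℓ : ℕ) (f : (Fin ℓ → U) → ℝ) (g : (Fin ℓ → V) → ℝ),
      (∀ x, f x ∈ Set.Icc (0:ℝ) 1) ∧ (∀ y, g y ∈ Set.Icc (0:ℝ) 1) ∧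
      p ≤ (∑ x : (Fin ℓ → U) × (Fin ℓ → V), iid ρ ℓ x * (f x.1 * g x.2)) ∧
      c = (∑ x : (Fin ℓ → U) × (Fin ℓ → V), iid ρ ℓ x * f x.1)
        + (∑ x : (Fin ℓ → U) × (Fin ℓ → V), iid ρ ℓ x * g x.2) }

/-- There is a `p`-collision protocol for `ρ` with domain size `n` and output size at most `k`.
    The players may use private randomness (uniform over `Fin sA`, `Fin sB` weighted by
    distributions `μA`, `μB`, independent of everything else). -/
def ColLE [Fintype U] [Fintype V] (ρ : U × V → ℝ) (n : ℕ) (p : ℝ) (k : ℕ) : Prop :=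
  ∃ (ℓ sA sB : ℕ) (μA : Fin sA → ℝ) (μB : Fin sB → ℝ)
    (A : (Fin ℓ → U) → Fin sA → Finset (Fin n))
    (B : (Fin ℓ → V) → Fin sB → Finset (Fin n)),
    IsDist μA ∧ IsDist μB ∧
    (∀ i : Fin n, p ≤ ∑ x : (Fin ℓ → U) × (Fin ℓ → V), ∑ rA, ∑ rB,
        iid ρ ℓ x * (μA rA * μB rB) *
          (if i ∈ A x.1 rA ∧ i ∈ B x.2 rB then (1:ℝ) else 0)) ∧
    (∀ (x : (Fin ℓ → U) × (Fin ℓ → V)) (rA : Fin sA),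
        0 < iid ρ ℓ x → 0 < μA rA → (A x.1 rA).card ≤ k) ∧
    (∀ (x : (Fin ℓ → U) × (Fin ℓ → V)) (rB : Fin sB),
        0 < iid ρ ℓ x → 0 < μB rB → (B x.2 rB).card ≤ k)

/-- Collision complexity `col_ρ(n, p)`, valued in `ℕ∞` (`sInf ∅ = ⊤`). -/
noncomputable def col [Fintype U] [Fintype V] (ρ : U × V → ℝ) (n : ℕ) (p : ℝ) : ℕ∞ :=
  sInf { k : ℕ∞ | ∃ m : ℕ, k = (m : ℕ∞) ∧ ColLE ρ n p m }

/-- Base-2 Shannon entropy of a finitely supported distribution. -/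
noncomputable def ent2 {α : Type*} [Fintype α] (μ : α → ℝ) : ℝ :=
  ∑ a, -(μ a * Real.logb 2 (μ a))

open Classical in
/-- Probability of an event under `μ`. -/
noncomputable def prEvent {Ω : Type*} [Fintype Ω] (μ : Ω → ℝ) (P : Ω → Prop) : ℝ :=
  ∑ ω, if P ω then μ ω else 0

/-- The distribution of a random variable `Z` conditioned on an event `P`. -/
noncomputable def condDist {Ω α : Type*} [Fintype Ω] (μ : Ω → ℝ) (Z : Ω → α)
    (P : Ω → Prop) : α → ℝ :=
  fun a => prEvent μ (fun ω => Z ω = a ∧ P ω) / prEvent μ P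

/-- The `L^r(μ)`-norm of a complex-valued function on a finite probability space. -/
noncomputable def lnorm {α : Type*} [Fintype α] (μ : α → ℝ) (r : ℝ) (h : α → ℂ) : ℝ :=
  (∑ a, μ a * ‖h a‖ ^ r) ^ (1 / r)

/-- The conditional-expectation operator `T_ρ` of a bipartite distribution. -/
noncomputable def condOp [Fintype U] [Fintype V] (ρ : U × V → ℝ) (f : U → ℂ) : V → ℂ :=
  fun v => ∑ u, ((ρ (u, v) / margSnd ρ v : ℝ) : ℂ) * f u

/-- `ρ` is `q`-to-`p` hypercontractive. -/
def Hyper [Fintype U] [Fintype V] (ρ : U × V → ℝ) (q p : ℝ) : Prop :=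
  ∀ f : U → ℂ, lnorm (margSnd ρ) q (condOp ρ f) ≤ lnorm (margFst ρ) p f

/-- Inner product over 𝔽₂. -/
def ipF2 {m : ℕ} (u v : Fin m → ZMod 2) : ZMod 2 := ∑ i, u i * v i

/-- `σ_{m,b}`: uniform distribution on pairs `(u,v) ∈ 𝔽₂^m × 𝔽₂^m` with `u·v = b`. -/
noncomputable def sigmaIP (m : ℕ) (b : ZMod 2) :
    ((Fin m → ZMod 2) × (Fin m → ZMod 2)) → ℝ :=
  fun p => if ipF2 p.1 p.2 = b then
      (((Finset.univ.filter
        (fun q : (Fin m → ZMod 2) × (Fin m → ZMod 2) => ipF2 q.1 q.2 = b)).card : ℝ))⁻¹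
    else 0

/-- `ρ_disj`: uniform distribution on `{(0,0),(0,1),(1,0)} ⊆ {0,1} × {0,1}`
    (with `false = 0`, `true = 1`). -/
noncomputable def rhoDisj : Bool × Bool → ℝ :=
  fun x => if x = (true, true) then 0 else 1/3


/-!
Start from an agreement protocol `(f, g)` of cost `c < agr ρ p + 1/n` and success at least `p`.
Give every `i ∈ [n]` a row of three independent blocks, each consisting of fresh samples and one
private uniform coin in `Fin N` per player; a player accepts a block when its coin is below
`⌈N f⌉`, i.e. with probability between `f` and `f + 1/N`. Each player outputs the rows in which
it accepted some block, or `∅` if there are more than `K ≈ 5nc` of them. Both players accept a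
common block with probability `q ≥ p`, so they hit row `i` together with probability
`1 - (1 - q)^3`; independently of row `i`, Markov's inequality bounds by `3/5` the probability
that the other rows make one of them accept `K` blocks. For `p ≤ 1/6` this leaves
`(1 - (1 - p)^3) · 2/5 ≥ p`. When `agr ρ p` is too large for this, `n ≤ 9n·agr ρ p + 48` and
outputting all of `[n]` suffices.
-/

open Finset

section FiniteDistributions

variable {α β γ ι : Type*}

def prodDist (μ : α → ℝ) (ν : β → ℝ) (z : α × β) : ℝ := μ z.1 * ν z.2

def piDist [Fintype ι] (w : γ → ℝ) (ω : ι → γ) : ℝ := ∏ j, w (ω j)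

noncomputable def unifDist (N : ℕ) (_ : Fin N) : ℝ := (N : ℝ)⁻¹

lemma isDist_prodDist [Fintype α] [Fintype β] {μ : α → ℝ} {ν : β → ℝ} (hμ : IsDist μ)
    (hν : IsDist ν) : IsDist (prodDist μ ν) :=
  ⟨fun z => mul_nonneg (hμ.1 _) (hν.1 _), by
    simp [prodDist, Fintype.sum_prod_type, ← mul_sum, hν.2, hμ.2]⟩

lemma isDist_piDist [Fintype γ] [Fintype ι] [DecidableEq ι] {w : γ → ℝ} (hw : IsDist w) :
    IsDist (piDist (ι := ι) w) :=
  ⟨fun ω => prod_nonneg fun j _ => hw.1 _, by simp [piDist, ← Fintype.prod_sum, hw.2]⟩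

lemma isDist_unifDist {N : ℕ} (hN : 0 < N) : IsDist (unifDist N) :=
  ⟨fun _ => by simp [unifDist], by simp [unifDist, hN.ne']⟩

lemma IsDist.comp_equiv [Fintype α] [Fintype β] {μ : α → ℝ} (hμ : IsDist μ) (e : β ≃ α) :
    IsDist (μ ∘ e) :=
  ⟨fun _ => hμ.1 _, by rw [← hμ.2]; exact e.sum_comp μ⟩

lemma expect_comp_equiv [Fintype α] [Fintype β] (μ : α → ℝ) (F : α → ℝ) (e : β ≃ α) :
    expect (μ ∘ e) (F ∘ e) = expect μ F :=
  e.sum_comp fun a => μ a * F a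

lemma expect_mono [Fintype α] {μ : α → ℝ} (hμ : ∀ a, 0 ≤ μ a) {F G : α → ℝ}
    (h : ∀ a, F a ≤ G a) : expect μ F ≤ expect μ G :=
  sum_le_sum fun a _ => mul_le_mul_of_nonneg_left (h a) (hμ a)

lemma expect_sum {κ : Type*} [Fintype α] (μ : α → ℝ) (s : Finset κ) (F : κ → α → ℝ) :
    expect μ (fun a => ∑ k ∈ s, F k a) = ∑ k ∈ s, expect μ (F k) := by
  simp only [expect, mul_sum]
  exact sum_comm

lemma IsDist.expect_add_const [Fintype α] {μ : α → ℝ} (hμ : IsDist μ) (F : α → ℝ) (c : ℝ) :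
    expect μ (fun a => F a + c) = expect μ F + c := by
  simp [expect, mul_add, sum_add_distrib, ← sum_mul, hμ.2]

lemma expect_prodDist [Fintype α] [Fintype β] (μ : α → ℝ) (ν : β → ℝ) (F : α × β → ℝ) :
    expect (prodDist μ ν) F = expect μ fun a => expect ν fun b => F (a, b) := by
  simp only [expect, prodDist, Fintype.sum_prod_type, mul_sum, mul_assoc]

lemma expect_piDist_prod [Fintype γ] [Fintype ι] [DecidableEq ι] (w : γ → ℝ)
    (F : ι → γ → ℝ) : expect (piDist w) (fun ω => ∏ j, F j (ω j)) = ∏ j, expect w (F j) := by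
  simp only [expect, piDist, ← prod_mul_distrib]
  exact (Fintype.prod_sum fun j c => w c * F j c).symm

lemma expect_piDist_eval [Fintype γ] [Fintype ι] [DecidableEq ι] {w : γ → ℝ} (hw : IsDist w)
    (j : ι) (G : γ → ℝ) : expect (piDist w) (fun ω => G (ω j)) = expect w G := by
  have h := expect_piDist_prod w fun k c => if k = j then G c else 1
  simp only [prod_ite_eq', mem_univ, if_true] at h
  rw [h, prod_eq_single j (fun k _ hk => by simp [hk, expect, hw.2]) (by simp)]
  simp

lemma piDist_eq_prodDist_funSplitAt [Fintype ι] [DecidableEq ι] (w : γ → ℝ) (i : ι)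
    (ω : ι → γ) : piDist w ω = prodDist w (piDist w) (Equiv.funSplitAt i γ ω) := by
  simp only [piDist, prodDist, Equiv.funSplitAt_apply]
  rw [Fintype.prod_eq_mul_prod_compl i]
  exact congrArg _ (prod_subtype _ (by simp) _)

end FiniteDistributions

section Events

variable {α β γ ι : Type*}

lemma prEvent_eq_expect [Fintype α] (μ : α → ℝ) (P : α → Prop) [DecidablePred P] :
    prEvent μ P = expect μ fun a => if P a then 1 else 0 := by
  refine sum_congr rfl fun a _ => ?_
  by_cases h : P a <;> simp [h]

lemma prEvent_nonneg [Fintype α] {μ : α → ℝ} (hμ : ∀ a, 0 ≤ μ a) (P : α → Prop) :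
    0 ≤ prEvent μ P :=
  sum_nonneg fun a _ => by split_ifs <;> simp [hμ a]

lemma prEvent_mono [Fintype α] {μ : α → ℝ} (hμ : ∀ a, 0 ≤ μ a) {P Q : α → Prop}
    (h : ∀ a, P a → Q a) : prEvent μ P ≤ prEvent μ Q := by
  refine sum_le_sum fun a _ => ?_
  by_cases hP : P a
  · simp [hP, h a hP]
  · by_cases hQ : Q a <;> simp [hP, hQ, hμ a]

lemma IsDist.prEvent_not [Fintype α] {μ : α → ℝ} (hμ : IsDist μ) (P : α → Prop) :
    prEvent μ (fun a => ¬ P a) = 1 - prEvent μ P := by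
  rw [prEvent, prEvent, ← hμ.2, ← sum_sub_distrib]
  refine sum_congr rfl fun a _ => ?_
  by_cases h : P a <;> simp [h]

lemma IsDist.prEvent_true [Fintype α] {μ : α → ℝ} (hμ : IsDist μ) :
    prEvent μ (fun _ => True) = 1 := by
  simp [prEvent, hμ.2]

lemma IsDist.prEvent_le_one [Fintype α] {μ : α → ℝ} (hμ : IsDist μ) (P : α → Prop) :
    prEvent μ P ≤ 1 := by
  linarith [hμ.prEvent_not P, prEvent_nonneg hμ.1 fun a => ¬ P a]

lemma IsDist.one_sub_sub_le_prEvent [Fintype α] {μ : α → ℝ} (hμ : IsDist μ) (P Q : α → Prop) :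
    1 - prEvent μ P - prEvent μ Q ≤ prEvent μ (fun a => ¬ P a ∧ ¬ Q a) := by
  rw [prEvent, prEvent, prEvent, ← hμ.2, ← sum_sub_distrib, ← sum_sub_distrib]
  refine sum_le_sum fun a _ => ?_
  by_cases hP : P a <;> by_cases hQ : Q a <;> simp [hP, hQ]
  linarith [hμ.1 a]

lemma prEvent_le_expect_div [Fintype α] {μ : α → ℝ} (hμ : ∀ a, 0 ≤ μ a) {X : α → ℝ}
    (hX : ∀ a, 0 ≤ X a) {c : ℝ} (hc : 0 < c) :
    prEvent μ (fun a => c ≤ X a) ≤ expect μ X / c := by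
  rw [prEvent, le_div_iff₀ hc, expect, sum_mul]
  refine sum_le_sum fun a _ => ?_
  by_cases h : c ≤ X a <;> simp [h]
  · exact mul_le_mul_of_nonneg_left h (hμ a)
  · exact mul_nonneg (hμ a) (hX a)

lemma prEvent_comp_equiv [Fintype α] [Fintype β] (μ : α → ℝ) (P : α → Prop) (e : β ≃ α) :
    prEvent (μ ∘ e) (P ∘ e) = prEvent μ P := by
  classical
  simp only [prEvent_eq_expect]
  exact expect_comp_equiv μ (fun a => if P a then 1 else 0) e

lemma prEvent_prodDist [Fintype α] [Fintype β] (μ : α → ℝ) (ν : β → ℝ) (P : α × β → Prop) :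
    prEvent (prodDist μ ν) P = expect μ fun a => prEvent ν fun b => P (a, b) := by
  classical
  simp only [prEvent_eq_expect, expect_prodDist]

lemma prEvent_prodDist_and [Fintype α] [Fintype β] (μ : α → ℝ) (ν : β → ℝ) (P : α → Prop)
    (Q : β → Prop) :
    prEvent (prodDist μ ν) (fun z => P z.1 ∧ Q z.2) = prEvent μ P * prEvent ν Q := by
  classical
  rw [prEvent_eq_expect, prEvent_eq_expect, prEvent_eq_expect, expect_prodDist, expect, expect,
    sum_mul]
  refine sum_congr rfl fun a _ => ?_
  by_cases hP : P a <;> simp [hP, expect]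

lemma prEvent_prodDist_fst [Fintype α] [Fintype β] (μ : α → ℝ) {ν : β → ℝ} (hν : IsDist ν)
    (P : α → Prop) : prEvent (prodDist μ ν) (fun z => P z.1) = prEvent μ P := by
  have h := prEvent_prodDist_and μ ν P fun _ => True
  simp only [and_true] at h
  rw [h, hν.prEvent_true, mul_one]

lemma prEvent_prodDist_snd [Fintype α] [Fintype β] {μ : α → ℝ} (hμ : IsDist μ) (ν : β → ℝ)
    (Q : β → Prop) : prEvent (prodDist μ ν) (fun z => Q z.2) = prEvent ν Q := by
  have h := prEvent_prodDist_and μ ν (fun _ => True) Q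
  simp only [true_and] at h
  rw [h, hμ.prEvent_true, one_mul]

lemma prEvent_piDist_forall [Fintype γ] [Fintype ι] [DecidableEq ι] (w : γ → ℝ)
    (P : ι → γ → Prop) :
    prEvent (piDist w) (fun ω => ∀ j, P j (ω j)) = ∏ j, prEvent w (P j) := by
  classical
  simp only [prEvent_eq_expect, ← expect_piDist_prod]
  congr! 2 with ω
  simp [prod_boole]

lemma prEvent_piDist_exists [Fintype γ] [Fintype ι] [DecidableEq ι] {w : γ → ℝ} (hw : IsDist w)
    (P : γ → Prop) :
    prEvent (piDist (ι := ι) w) (fun ω => ∃ j, P (ω j))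
      = 1 - (1 - prEvent w P) ^ Fintype.card ι := by
  have h := prEvent_piDist_forall (ι := ι) w fun _ c => ¬ P c
  simp only [hw.prEvent_not, prod_const, card_univ] at h
  rw [← h, ← (isDist_piDist hw).prEvent_not]
  simp

lemma prEvent_piDist_split [Fintype γ] [Fintype ι] [DecidableEq ι] (w : γ → ℝ) (i : ι)
    (P : γ → Prop) (Q : ({j // j ≠ i} → γ) → Prop) :
    prEvent (piDist w) (fun ω => P (ω i) ∧ Q (fun j => ω j))
      = prEvent w P * prEvent (piDist w) Q := by
  rw [← prEvent_prodDist_and, ← prEvent_comp_equiv _ _ (Equiv.funSplitAt i γ)]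
  congr 1
  funext ω
  exact piDist_eq_prodDist_funSplitAt w i ω

end Events

section Rows

variable {β J T : Type*}

open Classical in
noncomputable def hitRows [Fintype J] [Fintype T] (P : β → Prop) (ω : J → T → β) : Finset J :=
  {j | ∃ t, P (ω j t)}

open Classical in
noncomputable def hitCount [Fintype J] [Fintype T] (P : β → Prop) (ω : J → T → β) : ℕ :=
  #{x : J × T | P (ω x.1 x.2)}

def discardIfLarge (S : Finset J) (K : ℕ) : Finset J := if #S ≤ K then S else ∅

lemma card_discardIfLarge_le (S : Finset J) (K : ℕ) : #(discardIfLarge S K) ≤ K := by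
  unfold discardIfLarge
  split_ifs with h
  · exact h
  · simp

lemma mem_discardIfLarge_hitRows [Fintype J] [DecidableEq J] [Fintype T] {P : β → Prop}
    {ω : J → T → β} {i : J} {K : ℕ} (hi : ∃ t, P (ω i t))
    (hK : hitCount P (fun j : {j // j ≠ i} => ω j) < K) :
    i ∈ discardIfLarge (hitRows P ω) K := by
  classical
  have hmem : i ∈ hitRows P ω := by simp [hitRows, hi]
  have herase : #((hitRows P ω).erase i) ≤ hitCount P (fun j : {j // j ≠ i} => ω j) := by
    refine (card_le_card ?_).trans (card_image_le (f := fun x : {j // j ≠ i} × T => (x.1 : J)))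
    intro j hj
    obtain ⟨hji, t, ht⟩ : j ≠ i ∧ ∃ t, P (ω j t) := by simpa [hitRows] using hj
    exact mem_image.2 ⟨(⟨j, hji⟩, t), by simpa using ht, rfl⟩
  rw [discardIfLarge, if_pos (by have := card_erase_add_one hmem; omega)]
  exact hmem

lemma expect_hitCount [Fintype β] [Fintype J] [DecidableEq J] [Fintype T] [DecidableEq T]
    {w : β → ℝ} (hw : IsDist w) (P : β → Prop) :
    expect (piDist (piDist w)) (fun ω : J → T → β => (hitCount P ω : ℝ))
      = Fintype.card J * Fintype.card T * prEvent w P := by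
  classical
  have hcount : ∀ ω : J → T → β,
      (hitCount P ω : ℝ) = ∑ x : J × T, if P (ω x.1 x.2) then 1 else 0 := by
    intro ω
    rw [hitCount, card_filter]
    push_cast
    rfl
  have hterm : ∀ x : J × T,
      expect (piDist (piDist w)) (fun ω => if P (ω x.1 x.2) then 1 else 0) = prEvent w P := by
    intro x
    rw [expect_piDist_eval (isDist_piDist hw) x.1 fun r => if P (r x.2) then 1 else 0,
      expect_piDist_eval hw x.2 fun b => if P b then 1 else 0, prEvent_eq_expect]
  simp only [hcount, expect_sum, hterm, sum_const, card_univ, Fintype.card_prod, nsmul_eq_mul]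
  push_cast
  ring

lemma prEvent_le_hitCount_le [Fintype β] [Fintype J] [DecidableEq J] [Fintype T]
    [DecidableEq T] {w : β → ℝ} (hw : IsDist w) (P : β → Prop) {K : ℕ} (hK : 0 < K) :
    prEvent (piDist (piDist w)) (fun ω : J → T → β => K ≤ hitCount P ω)
      ≤ Fintype.card J * Fintype.card T * prEvent w P / K := by
  rw [← expect_hitCount (J := J) (T := T) hw]
  convert prEvent_le_expect_div (isDist_piDist (ι := J) (isDist_piDist (ι := T) hw)).1
    (fun ω => Nat.cast_nonneg (hitCount P ω)) (Nat.cast_pos.2 hK) using 3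
  exact Nat.cast_le.symm

lemma le_prEvent_rowHit_and_hitCount_lt [Fintype β] [Fintype J] [DecidableEq J] [Fintype T]
    [DecidableEq T] {w : β → ℝ} (hw : IsDist w) (i : J) (PA PB : β → Prop) {K : ℕ}
    (hK : 0 < K) :
    (1 - (1 - prEvent w (fun b => PA b ∧ PB b)) ^ Fintype.card T) *
        (1 - Fintype.card J * Fintype.card T * (prEvent w PA + prEvent w PB) / K)
      ≤ prEvent (piDist (piDist w)) (fun ω : J → T → β => (∃ t, PA (ω i t) ∧ PB (ω i t)) ∧
          hitCount PA (fun j : {j // j ≠ i} => ω j) < K ∧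
          hitCount PB (fun j : {j // j ≠ i} => ω j) < K) := by
  rw [prEvent_piDist_split (piDist w) i (fun r => ∃ t, PA (r t) ∧ PB (r t))
    (fun ω => hitCount PA ω < K ∧ hitCount PB ω < K),
    prEvent_piDist_exists hw fun b => PA b ∧ PB b]
  have hq := hw.prEvent_le_one fun b => PA b ∧ PB b
  have hq0 := prEvent_nonneg hw.1 fun b => PA b ∧ PB b
  refine mul_le_mul_of_nonneg_left ?_ (sub_nonneg.2 (pow_le_one₀ (by linarith) (by linarith)))
  have hmarkov : ∀ P : β → Prop,
      prEvent (piDist (piDist w)) (fun ω : {j // j ≠ i} → T → β => K ≤ hitCount P ω)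
        ≤ Fintype.card J * Fintype.card T * prEvent w P / K := fun P => by
    have := prEvent_nonneg hw.1 P
    refine (prEvent_le_hitCount_le hw P hK).trans ?_
    gcongr
    exact Fintype.card_subtype_le _
  have hunion := (isDist_piDist (isDist_piDist hw)).one_sub_sub_le_prEvent
    (fun ω : {j // j ≠ i} → T → β => K ≤ hitCount PA ω) (fun ω => K ≤ hitCount PB ω)
  simp only [not_le] at hunion
  have hsplit : (Fintype.card J : ℝ) * Fintype.card T * (prEvent w PA + prEvent w PB) / K
      = Fintype.card J * Fintype.card T * prEvent w PA / K
        + Fintype.card J * Fintype.card T * prEvent w PB / K := by ring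
  linarith [hmarkov PA, hmarkov PB]

end Rows

section Protocols

variable {U V : Type*}

def iidOn (ρ : U × V → ℝ) (ι : Type*) [Fintype ι] (xy : (ι → U) × (ι → V)) : ℝ :=
  ∏ j, ρ (xy.1 j, xy.2 j)

lemma isDist_iidOn [Fintype U] [Fintype V] {ρ : U × V → ℝ} (hρ : IsDist ρ) (ι : Type*)
    [Fintype ι] [DecidableEq ι] : IsDist (iidOn ρ ι) :=
  (isDist_piDist hρ).comp_equiv (Equiv.arrowProdEquivProdArrow ι (fun _ => U) (fun _ => V)).symm

lemma isDist_iid [Fintype U] [Fintype V] {ρ : U × V → ℝ} (hρ : IsDist ρ) (ℓ : ℕ) :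
    IsDist (iid ρ ℓ) :=
  isDist_iidOn hρ (Fin ℓ)

lemma iidOn_comp_equiv (ρ : U × V → ℝ) {ι κ : Type*} [Fintype ι] [Fintype κ] (e : ι ≃ κ)
    (x : κ → U) (y : κ → V) : iidOn ρ ι (x ∘ e, y ∘ e) = iidOn ρ κ (x, y) :=
  e.prod_comp fun k => ρ (x k, y k)

lemma ColLE.mono [Fintype U] [Fintype V] {ρ : U × V → ℝ} {n : ℕ} {p q : ℝ} {k : ℕ}
    (h : ColLE ρ n q k) (hpq : p ≤ q) : ColLE ρ n p k := by
  obtain ⟨ℓ, sA, sB, μA, μB, A, B, hμA, hμB, hcol, hA, hB⟩ := h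
  exact ⟨ℓ, sA, sB, μA, μB, A, B, hμA, hμB, fun i => hpq.trans (hcol i), hA, hB⟩

lemma colLE_of_protocol [Fintype U] [Fintype V] {ι RA RB : Type*} [Fintype ι] [DecidableEq ι]
    [Fintype RA] [Fintype RB] {ρ : U × V → ℝ} {n : ℕ} {p : ℝ} {k : ℕ} {μA : RA → ℝ}
    {μB : RB → ℝ} (hμA : IsDist μA) (hμB : IsDist μB)
    (A : (ι → U) → RA → Finset (Fin n)) (B : (ι → V) → RB → Finset (Fin n))
    (hcol : ∀ i, p ≤ prEvent (prodDist (iidOn ρ ι) (prodDist μA μB))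
      (fun z => i ∈ A z.1.1 z.2.1 ∧ i ∈ B z.1.2 z.2.2))
    (hA : ∀ x r, #(A x r) ≤ k) (hB : ∀ y r, #(B y r) ≤ k) : ColLE ρ n p k := by
  let eι := Fintype.equivFin ι
  let eA := Fintype.equivFin RA
  let eB := Fintype.equivFin RB
  refine ⟨Fintype.card ι, Fintype.card RA, Fintype.card RB, μA ∘ eA.symm, μB ∘ eB.symm,
    fun x r => A (x ∘ eι) (eA.symm r), fun y r => B (y ∘ eι) (eB.symm r),
    hμA.comp_equiv _, hμB.comp_equiv _, fun i => (hcol i).trans (le_of_eq ?_),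
    fun _ _ _ _ => hA _ _, fun _ _ _ _ => hB _ _⟩
  let E := ((Equiv.arrowCongr eι.symm (Equiv.refl U)).prodCongr
    (Equiv.arrowCongr eι.symm (Equiv.refl V))).prodCongr (eA.symm.prodCongr eB.symm)
  rw [← prEvent_comp_equiv _ _ E]
  classical
  simp only [prEvent_eq_expect, expect, Fintype.sum_prod_type]
  refine sum_congr rfl fun x _ => sum_congr rfl fun y _ => sum_congr rfl fun rA _ =>
    sum_congr rfl fun rB _ => ?_
  rw [← show iidOn ρ ι (x ∘ eι, y ∘ eι) = iid ρ _ (x, y) from iidOn_comp_equiv ρ eι x y]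
  rfl

end Protocols

section Rounding

variable {U V J T : Type*}

abbrev Block (U V : Type*) (ℓ N : ℕ) := ((Fin ℓ → U) × (Fin ℓ → V)) × (Fin N × Fin N)

noncomputable def blockDist (ρ : U × V → ℝ) (ℓ N : ℕ) : Block U V ℓ N → ℝ :=
  prodDist (iid ρ ℓ) (prodDist (unifDist N) (unifDist N))

def roundAccept {α : Type*} (N : ℕ) (f : α → ℝ) (a : α × Fin N) : Prop :=
  (a.2 : ℕ) < ⌈N * f a.1⌉₊

def blocksEquiv (U V J T : Type*) (ℓ N : ℕ) : (J → T → Block U V ℓ N) ≃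
    ((J × T × Fin ℓ → U) × (J × T × Fin ℓ → V)) × ((J × T → Fin N) × (J × T → Fin N)) where
  toFun ω := ((fun k => (ω k.1 k.2.1).1.1 k.2.2, fun k => (ω k.1 k.2.1).1.2 k.2.2),
    (fun k => (ω k.1 k.2).2.1, fun k => (ω k.1 k.2).2.2))
  invFun z j t :=
    ((fun s => z.1.1 (j, t, s), fun s => z.1.2 (j, t, s)), (z.2.1 (j, t), z.2.2 (j, t)))
  left_inv _ := rfl
  right_inv _ := rfl

lemma isDist_blockDist [Fintype U] [Fintype V] {ρ : U × V → ℝ} (hρ : IsDist ρ) (ℓ : ℕ) {N : ℕ}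
    (hN : 0 < N) : IsDist (blockDist ρ ℓ N) :=
  isDist_prodDist (isDist_iid hρ ℓ) (isDist_prodDist (isDist_unifDist hN) (isDist_unifDist hN))

lemma prodDist_iidOn_blocksEquiv [Fintype J] [Fintype T] (ρ : U × V → ℝ) (ℓ N : ℕ)
    (ω : J → T → Block U V ℓ N) :
    prodDist (iidOn ρ (J × T × Fin ℓ)) (prodDist (piDist (unifDist N)) (piDist (unifDist N)))
        (blocksEquiv U V J T ℓ N ω)
      = piDist (piDist (blockDist ρ ℓ N)) ω := by
  simp only [prodDist, piDist, iidOn, blockDist, iid, blocksEquiv, Equiv.coe_fn_mk,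
    Fintype.prod_prod_type, prod_mul_distrib]

lemma prEvent_unifDist_lt {N k : ℕ} (hk : k ≤ N) :
    prEvent (unifDist N) (fun r => (r : ℕ) < k) = k / N := by
  classical
  rw [prEvent_eq_expect]
  simp only [expect, unifDist, mul_ite, mul_one, mul_zero]
  rw [← sum_filter, sum_const, nsmul_eq_mul, div_eq_mul_inv]
  congr
  convert Fin.card_filter_val_lt
  exact (min_eq_right hk).symm

lemma prEvent_roundAccept {α : Type*} (N : ℕ) (f : α → ℝ) {a : α} (ha : f a ≤ 1) :
    prEvent (unifDist N) (fun r => roundAccept N f (a, r)) = ⌈N * f a⌉₊ / N :=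
  prEvent_unifDist_lt (Nat.ceil_le.2 (by simpa using mul_le_of_le_one_right N.cast_nonneg ha))

lemma le_natCeil_mul_div {N : ℕ} (hN : 0 < N) (c : ℝ) : c ≤ ⌈N * c⌉₊ / N := by
  rw [le_div_iff₀ (Nat.cast_pos.2 hN), mul_comm]
  exact Nat.le_ceil _

lemma natCeil_mul_div_le {N : ℕ} (hN : 0 < N) {c : ℝ} (hc : 0 ≤ c) :
    ⌈N * c⌉₊ / N ≤ c + 1 / N := by
  have hN' : (0 : ℝ) < N := Nat.cast_pos.2 hN
  rw [div_le_iff₀ hN', add_mul, one_div_mul_cancel hN'.ne', mul_comm]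
  exact (Nat.ceil_lt_add_one (by positivity)).le

lemma prEvent_blockDist_fst_le [Fintype U] [Fintype V] {ρ : U × V → ℝ} (hρ : IsDist ρ)
    {ℓ N : ℕ} (hN : 0 < N) {f : (Fin ℓ → U) → ℝ} (hf : ∀ x, f x ∈ Set.Icc 0 1) :
    prEvent (blockDist ρ ℓ N) (fun b => roundAccept N f (b.1.1, b.2.1))
      ≤ expect (iid ρ ℓ) (fun xy => f xy.1) + 1 / N := by
  rw [blockDist, prEvent_prodDist, ← (isDist_iid hρ ℓ).expect_add_const]
  refine expect_mono (isDist_iid hρ ℓ).1 fun xy => ?_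
  rw [prEvent_prodDist_fst _ (isDist_unifDist hN) (fun r => roundAccept N f (xy.1, r)),
    prEvent_roundAccept N f (hf xy.1).2]
  exact natCeil_mul_div_le hN (hf xy.1).1

lemma prEvent_blockDist_snd_le [Fintype U] [Fintype V] {ρ : U × V → ℝ} (hρ : IsDist ρ)
    {ℓ N : ℕ} (hN : 0 < N) {g : (Fin ℓ → V) → ℝ} (hg : ∀ y, g y ∈ Set.Icc 0 1) :
    prEvent (blockDist ρ ℓ N) (fun b => roundAccept N g (b.1.2, b.2.2))
      ≤ expect (iid ρ ℓ) (fun xy => g xy.2) + 1 / N := by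
  rw [blockDist, prEvent_prodDist, ← (isDist_iid hρ ℓ).expect_add_const]
  refine expect_mono (isDist_iid hρ ℓ).1 fun xy => ?_
  rw [prEvent_prodDist_snd (isDist_unifDist hN) _ (fun r => roundAccept N g (xy.2, r)),
    prEvent_roundAccept N g (hg xy.2).2]
  exact natCeil_mul_div_le hN (hg xy.2).1

lemma expect_le_prEvent_blockDist_and [Fintype U] [Fintype V] {ρ : U × V → ℝ}
    (hρ : IsDist ρ) {ℓ N : ℕ} (hN : 0 < N) {f : (Fin ℓ → U) → ℝ} {g : (Fin ℓ → V) → ℝ}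
    (hf : ∀ x, f x ∈ Set.Icc 0 1) (hg : ∀ y, g y ∈ Set.Icc 0 1) :
    expect (iid ρ ℓ) (fun xy => f xy.1 * g xy.2)
      ≤ prEvent (blockDist ρ ℓ N)
          (fun b => roundAccept N f (b.1.1, b.2.1) ∧ roundAccept N g (b.1.2, b.2.2)) := by
  rw [blockDist, prEvent_prodDist]
  refine expect_mono (isDist_iid hρ ℓ).1 fun xy => ?_
  calc f xy.1 * g xy.2 ≤ (⌈N * f xy.1⌉₊ / N) * (⌈N * g xy.2⌉₊ / N) :=
        mul_le_mul (le_natCeil_mul_div hN _) (le_natCeil_mul_div hN _) (hg xy.2).1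
          (by positivity)
    _ = prEvent (unifDist N) (fun r => roundAccept N f (xy.1, r))
          * prEvent (unifDist N) (fun r => roundAccept N g (xy.2, r)) := by
        rw [prEvent_roundAccept N f (hf xy.1).2, prEvent_roundAccept N g (hg xy.2).2]
    _ = _ := (prEvent_prodDist_and _ _ _ _).symm

theorem colLE_of_rounding [Fintype U] [Fintype V] {ρ : U × V → ℝ} (hρ : IsDist ρ) {ℓ : ℕ}
    (f : (Fin ℓ → U) → ℝ) (g : (Fin ℓ → V) → ℝ) (n m : ℕ) {N K : ℕ} (hN : 0 < N)
    (hK : 0 < K) :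
    ColLE ρ n ((1 - (1 - prEvent (blockDist ρ ℓ N)
          (fun b => roundAccept N f (b.1.1, b.2.1) ∧ roundAccept N g (b.1.2, b.2.2))) ^ m) *
        (1 - n * m * (prEvent (blockDist ρ ℓ N) (fun b => roundAccept N f (b.1.1, b.2.1))
          + prEvent (blockDist ρ ℓ N) (fun b => roundAccept N g (b.1.2, b.2.2))) / K)) K := by
  refine colLE_of_protocol (ι := Fin n × Fin m × Fin ℓ)
    (isDist_piDist (isDist_unifDist hN)) (isDist_piDist (isDist_unifDist hN))
    (fun x r => discardIfLarge
      (hitRows (roundAccept N f) fun j t => (fun s => x (j, t, s), r (j, t))) K)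
    (fun y r => discardIfLarge
      (hitRows (roundAccept N g) fun j t => (fun s => y (j, t, s), r (j, t))) K)
    (fun i => ?_) (fun _ _ => card_discardIfLarge_le _ _) (fun _ _ => card_discardIfLarge_le _ _)
  rw [← prEvent_comp_equiv _ _ (blocksEquiv U V (Fin n) (Fin m) ℓ N)]
  simp only [Function.comp_def, prodDist_iidOn_blocksEquiv]
  have hrow := le_prEvent_rowHit_and_hitCount_lt (J := Fin n) (T := Fin m)
    (isDist_blockDist hρ ℓ hN) i (fun b => roundAccept N f (b.1.1, b.2.1))
    (fun b => roundAccept N g (b.1.2, b.2.2)) hK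
  simp only [Fintype.card_fin] at hrow
  -- Through `blocksEquiv`, the players' sets are definitionally `discardIfLarge (hitRows _ ω) K`.
  refine hrow.trans (prEvent_mono (isDist_piDist (isDist_piDist (isDist_blockDist hρ ℓ hN))).1
    fun ω hω => ⟨mem_discardIfLarge_hitRows (hω.1.imp fun _ => And.left) hω.2.1,
      mem_discardIfLarge_hitRows (hω.1.imp fun _ => And.right) hω.2.2⟩)

end Rounding

section Agreement

variable {U V : Type*} [Fintype U] [Fintype V]

lemma colLE_univ (ρ : U × V → ℝ) (n : ℕ) {p : ℝ} (hp : p ≤ 1) : ColLE ρ n p n := by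
  refine colLE_of_protocol (ι := Fin 0) (μA := fun _ : Unit => 1) (μB := fun _ : Unit => 1)
    ⟨fun _ => zero_le_one, by simp⟩ ⟨fun _ => zero_le_one, by simp⟩
    (fun _ _ => univ) (fun _ _ => univ) (fun i => ?_) (fun _ _ => by simp) (fun _ _ => by simp)
  simpa [prEvent, prodDist, iidOn] using hp

lemma coe_col_le_ofReal {ρ : U × V → ℝ} {n : ℕ} {p : ℝ} {k : ℕ} (h : ColLE ρ n p k) {r : ℝ}
    (hk : (k : ℝ) ≤ r) : ((col ρ n p : ℕ∞) : ℝ≥0∞) ≤ ENNReal.ofReal r := by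
  have hcol : col ρ n p ≤ k := sInf_le ⟨k, rfl, h⟩
  calc ((col ρ n p : ℕ∞) : ℝ≥0∞) ≤ ((k : ℕ∞) : ℝ≥0∞) := by exact_mod_cast hcol
    _ = ENNReal.ofReal k := by simp
    _ ≤ ENNReal.ofReal r := ENNReal.ofReal_le_ofReal hk

lemma agr_nonneg {ρ : U × V → ℝ} (hρ : ∀ z, 0 ≤ ρ z) (p : ℝ) : 0 ≤ agr ρ p := by
  refine Real.sInf_nonneg ?_
  rintro c ⟨ℓ, f, g, hf, hg, -, rfl⟩
  have hiid : ∀ x, 0 ≤ iid ρ ℓ x := fun x => prod_nonneg fun s _ => hρ _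
  exact add_nonneg (sum_nonneg fun x _ => mul_nonneg (hiid x) (hf _).1)
    (sum_nonneg fun x _ => mul_nonneg (hiid x) (hg _).1)

lemma exists_agreement_cost_lt (ρ : U × V → ℝ) {p : ℝ} (hp : p ≤ 1) {ε : ℝ} (hε : 0 < ε) :
    ∃ (ℓ : ℕ) (f : (Fin ℓ → U) → ℝ) (g : (Fin ℓ → V) → ℝ),
      (∀ x, f x ∈ Set.Icc 0 1) ∧ (∀ y, g y ∈ Set.Icc 0 1) ∧
      p ≤ expect (iid ρ ℓ) (fun xy => f xy.1 * g xy.2) ∧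
      expect (iid ρ ℓ) (fun xy => f xy.1) + expect (iid ρ ℓ) (fun xy => g xy.2)
        < agr ρ p + ε := by
  have hlt : sInf _ < agr ρ p + ε := lt_add_of_pos_right (agr ρ p) hε
  obtain ⟨c, ⟨ℓ, f, g, hf, hg, hs, rfl⟩, hc⟩ := exists_lt_of_csInf_lt (by
    exact ⟨2, 0, fun _ => 1, fun _ => 1, fun _ => by simp, fun _ => by simp,
      by simpa [iid] using hp, by norm_num [iid]⟩) hlt
  exact ⟨ℓ, f, g, hf, hg, hs, hc⟩

lemma two_mul_expect_mul_le {α : Type*} [Fintype α] {μ : α → ℝ} (hμ : ∀ a, 0 ≤ μ a)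
    {F G : α → ℝ} (hF : ∀ a, F a ∈ Set.Icc 0 1) (hG : ∀ a, G a ∈ Set.Icc 0 1) :
    2 * expect μ (fun a => F a * G a) ≤ expect μ F + expect μ G := by
  simp only [expect, mul_sum, ← sum_add_distrib]
  refine sum_le_sum fun a _ => ?_
  obtain ⟨hF0, hF1⟩ := hF a
  obtain ⟨hG0, hG1⟩ := hG a
  nlinarith [mul_nonneg (hμ a) (mul_nonneg (sub_nonneg.2 hF1) hG0),
    mul_nonneg (hμ a) (mul_nonneg (sub_nonneg.2 hG1) hF0)]

lemma le_one_sub_one_sub_pow_three_mul {p q τ : ℝ} (hpq : p ≤ q) (hq0 : 0 ≤ q) (hq1 : q ≤ 1)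
    (hp : p ≤ 1 / 6) (hτ : τ ≤ 3 / 5) : p ≤ (1 - (1 - q) ^ 3) * (1 - τ) := by
  have hcube : (1 - q) ^ 3 ≤ 1 := pow_le_one₀ (by linarith) (by linarith)
  rcases le_or_gt p 0 with hp0 | hp0
  · exact hp0.trans (mul_nonneg (by linarith) (by linarith))
  have hmono : (1 - q) ^ 3 ≤ (1 - p) ^ 3 := pow_le_pow_left₀ (by linarith) (by linarith) 3
  have hp' : 5 / 2 * p ≤ 1 - (1 - p) ^ 3 := by nlinarith [mul_pos hp0 hp0]
  calc p = 5 / 2 * p * (2 / 5) := by ring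
    _ ≤ (1 - (1 - q) ^ 3) * (1 - τ) :=
        mul_le_mul (by linarith) (by linarith) (by norm_num) (by linarith)

theorem colLE_of_agreement {ρ : U × V → ℝ} (hρ : IsDist ρ) {ℓ : ℕ} {f : (Fin ℓ → U) → ℝ}
    {g : (Fin ℓ → V) → ℝ} (hf : ∀ x, f x ∈ Set.Icc 0 1) (hg : ∀ y, g y ∈ Set.Icc 0 1)
    {n : ℕ} (hn : 0 < n) {p : ℝ} (hsucc : p ≤ expect (iid ρ ℓ) (fun xy => f xy.1 * g xy.2))
    (hp : p ≤ 1 / 6) :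
    ColLE ρ n p
      (⌈5 * n * (expect (iid ρ ℓ) (fun xy => f xy.1) + expect (iid ρ ℓ) (fun xy => g xy.2))⌉₊
        + 10) := by
  set K := ⌈5 * n * (expect (iid ρ ℓ) (fun xy => f xy.1)
    + expect (iid ρ ℓ) (fun xy => g xy.2))⌉₊ + 10 with hK
  have hnR : (0 : ℝ) < n := Nat.cast_pos.2 hn
  have hKR : (0 : ℝ) < K := by positivity
  have hw := isDist_blockDist hρ ℓ hn
  have hA := mul_le_mul_of_nonneg_left (prEvent_blockDist_fst_le hρ hn hf) hnR.le
  have hB := mul_le_mul_of_nonneg_left (prEvent_blockDist_snd_le hρ hn hg) hnR.le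
  rw [mul_add, mul_one_div_cancel hnR.ne'] at hA hB
  refine (colLE_of_rounding hρ f g n 3 hn (by positivity)).mono
    (le_one_sub_one_sub_pow_three_mul (hsucc.trans (expect_le_prEvent_blockDist_and hρ hn hf hg))
      (prEvent_nonneg hw.1 _) (hw.prEvent_le_one _) hp ?_)
  rw [div_le_iff₀ hKR]
  have hceil := Nat.le_ceil (5 * n * (expect (iid ρ ℓ) (fun xy => f xy.1)
    + expect (iid ρ ℓ) (fun xy => g xy.2)))
  have hKcast : (K : ℝ) = ⌈5 * n * (expect (iid ρ ℓ) (fun xy => f xy.1)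
      + expect (iid ρ ℓ) (fun xy => g xy.2))⌉₊ + 10 := by simp [hK]
  linarith

end Agreement

theorem stmt8_general {U V : Type} [Fintype U] [Fintype V]
    (ρ : U × V → ℝ) (hρ : IsDist ρ) (n : ℕ)
    (p : ℝ) (hp1 : p < 1) :
    ((col ρ n p : ℕ∞) : ℝ≥0∞) ≤ ENNReal.ofReal (9 * n * agr ρ p + 48) := by
  rcases le_or_gt (n : ℝ) (9 * n * agr ρ p + 48) with hsmall | hlarge
  · exact coe_col_le_ofReal (colLE_univ ρ n hp1.le) hsmall
  have ha := agr_nonneg hρ.1 p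
  have hn48 : (48 : ℝ) < n := by nlinarith
  have ha9 : 9 * agr ρ p < 1 := by nlinarith
  have hnR : (0 : ℝ) < n := by linarith
  obtain ⟨ℓ, f, g, hf, hg, hsucc, hcost⟩ := exists_agreement_cost_lt ρ hp1.le (inv_pos.2 hnR)
  -- Now `n > 48` and `agr ρ p < 1/9`, so `2p ≤ cost < 1/3` and the output size
  -- `⌈5n·cost⌉₊ + 10` stays below `5n·agr ρ p + 16`.
  have hmul := two_mul_expect_mul_le (isDist_iid hρ ℓ).1 (fun xy => hf xy.1) (fun xy => hg xy.2)
  have hinv : (n : ℝ)⁻¹ < 1 / 48 := by rw [one_div]; exact inv_strictAnti₀ (by norm_num) hn48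
  refine coe_col_le_ofReal
    (colLE_of_agreement hρ hf hg (Nat.cast_pos.1 hnR) hsucc (by linarith)) ?_
  have hcost' : 5 * n * (expect (iid ρ ℓ) (fun xy => f xy.1)
      + expect (iid ρ ℓ) (fun xy => g xy.2)) ≤ 5 * n * agr ρ p + 5 := by
    have h5 : (5 : ℝ) * n * (n : ℝ)⁻¹ = 5 := by field_simp
    nlinarith
  have hceil := (Nat.cast_le (α := ℝ).2 (Nat.ceil_mono hcost')).trans_lt
    (Nat.ceil_lt_add_one (by positivity))
  push_cast
  nlinarith

theorem stmt8 {U V : Type} [Fintype U] [Fintype V] [Nonempty U] [Nonempty V]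
    (ρ : U × V → ℝ) (hρ : IsDist ρ) (n : ℕ) (hn : 1 ≤ n)
    (p : ℝ) (hp0 : 0 < p) (hp1 : p < 1) :
    ((col ρ n p : ℕ∞) : ℝ≥0∞) ≤ ENNReal.ofReal (9 * n * agr ρ p + 48) :=
  stmt8_general ρ hρ n p hp1

end SR
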